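/- arXiv:1912.11862 — 6 statements merged into one kernel-verified Lean document; each statement's English description precedes it below -/
import Mathlib

section
/- Let φ(x) = log(1+e^x). For all real numbers A, D, Z, the matrix identity X_D · R · X_Z · R · X_A = X_{D-φ(-Z)} · R · X_{A+φ(Z)} holds, where X_Y = [[0,-e^{Y/2}],[e^{-Y/2},0]] and R = [[1,1],[-1,0]]. -/
open Matrix

noncomputable def edgeX (Y : ℝ) : Matrix (Fin 2) (Fin 2) ℝ :=
  !![0, -Real.exp (Y/2); Real.exp (-Y/2), 0]

def Rturn : Matrix (Fin 2) (Fin 2) ℝ := !![1, 1; -1, 0]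

noncomputable def phi (x : ℝ) : ℝ := Real.log (1 + Real.exp x)

lemma phi_sub (Z : ℝ) : phi Z - phi (-Z) = Z := by
  have h2 : (0:ℝ) < 1 + Real.exp (-Z) := by positivity
  have h : (1 + Real.exp Z) = Real.exp Z * (1 + Real.exp (-Z)) := by
    rw [mul_add, mul_one, ← Real.exp_add]
    simp [add_comm]
  rw [phi, phi, h, Real.log_mul (Real.exp_ne_zero _) (ne_of_gt h2), Real.log_exp]; ring

lemma phi_add (Z : ℝ) : Real.exp ((phi Z + phi (-Z))/2) = Real.exp (Z/2) + Real.exp (-Z/2) := by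
  have h1 : (0:ℝ) < 1 + Real.exp Z := by positivity
  have h2 : (0:ℝ) < 1 + Real.exp (-Z) := by positivity
  have hl : (0:ℝ) < Real.exp ((phi Z + phi (-Z))/2) := Real.exp_pos _
  have hr : (0:ℝ) < Real.exp (Z/2) + Real.exp (-Z/2) := by positivity
  have hsq : (Real.exp ((phi Z + phi (-Z))/2))^2 = (Real.exp (Z/2) + Real.exp (-Z/2))^2 := by
    rw [sq, ← Real.exp_add]
    have : (phi Z + phi (-Z))/2 + (phi Z + phi (-Z))/2 = phi Z + phi (-Z) := by ring
    rw [this, Real.exp_add, phi, phi, Real.exp_log h1, Real.exp_log h2]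
    have e1 : Real.exp Z = Real.exp (Z/2) * Real.exp (Z/2) := by
      rw [← Real.exp_add]; ring_nf
    have e2 : Real.exp (-Z) = Real.exp (-Z/2) * Real.exp (-Z/2) := by
      rw [← Real.exp_add]; ring_nf
    have e3 : Real.exp (Z/2) * Real.exp (-Z/2) = 1 := by
      rw [← Real.exp_add]; ring_nf; exact Real.exp_zero
    nlinarith [e1, e2, e3]
  nlinarith [hl, hr, hsq]

theorem flip_identity_RR (A D Z : ℝ) :
    edgeX D * Rturn * edgeX Z * Rturn * edgeX A
      = edgeX (D - phi (-Z)) * Rturn * edgeX (A + phi Z) := by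
  have hs := phi_sub Z
  have ha := phi_add Z
  ext i j
  fin_cases i <;> fin_cases j <;>
    simp [edgeX, Rturn, Matrix.mul_apply, Fin.sum_univ_two]
  · simp only [← Real.exp_add, Real.exp_eq_exp]
    linarith
  · simp only [← Real.exp_add, Real.exp_eq_exp]
    linarith
  · have h : (phi (-Z) - D) / 2 + (A + phi Z) / 2
        = (A - D)/2 + (phi Z + phi (-Z))/2 := by ring
    conv_rhs => rw [← Real.exp_add, h, Real.exp_add, ha]
    rw [mul_add, add_mul, ← Real.exp_add, ← Real.exp_add, ← Real.exp_add, ← Real.exp_add]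
    rw [show -D / 2 + -Z / 2 + A / 2 = (A - D) / 2 + -Z / 2 by ring,
        show -D / 2 + Z / 2 + A / 2 = (A - D) / 2 + Z / 2 by ring]
    rw [← Real.exp_add, ← Real.exp_add]
    ring_nf
end

section
/- Let φ(x) = log(1+e^x). For all real numbers B, D, Z, the matrix identity X_D · R · X_Z · L · X_B = X_{D-φ(-Z)} · L · X_{-Z} · R · X_{B-φ(-Z)} holds, where X_Y = [[0,-e^{Y/2}],[e^{-Y/2},0]], R = [[1,1],[-1,0]] and L = [[0,1],[-1,-1]]. -/
open Matrix
def Lturn : Matrix (Fin 2) (Fin 2) ℝ := !![0, 1; -1, -1]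
/-!
Shifting an edge coordinate by `c` multiplies `edgeX` by `diagExp c = diag(e^{c/2}, e^{-c/2})`
on either side, so the flip identity reduces to the middle block: `Rturn * edgeX Z * Lturn`
is the conjugate of `Lturn * edgeX (-Z) * Rturn` by `diagExp (phi (-Z))`. Conjugation by
`diagExp c` scales the off-diagonal entries by `e^{±c}`, and `e^{phi (-Z)} = 1 + e^{-Z}` is
exactly the ratio between the off-diagonal entries of the two blocks.
-/

noncomputable def diagExp (c : ℝ) : Matrix (Fin 2) (Fin 2) ℝ :=
  !![Real.exp (c/2), 0; 0, Real.exp (-c/2)]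

theorem exp_phi (x : ℝ) : Real.exp (phi x) = 1 + Real.exp x :=
  Real.exp_log (by positivity)

theorem edgeX_sub_eq_diagExp_mul (Y c : ℝ) : edgeX (Y - c) = diagExp (-c) * edgeX Y := by
  simp only [edgeX, diagExp, mul_fin_two, mul_zero, zero_mul, add_zero, zero_add, mul_neg,
    ← Real.exp_add]
  ring_nf

theorem edgeX_sub_eq_mul_diagExp (Y c : ℝ) : edgeX (Y - c) = edgeX Y * diagExp c := by
  simp only [edgeX, diagExp, mul_fin_two, mul_zero, zero_mul, add_zero, zero_add, neg_mul,
    ← Real.exp_add]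
  ring_nf

theorem Rturn_mul_edgeX_mul_Lturn (Z : ℝ) :
    Rturn * edgeX Z * Lturn
      = diagExp (phi (-Z)) * (Lturn * edgeX (-Z) * Rturn) * diagExp (-phi (-Z)) := by
  have exp_half_sq (x : ℝ) : Real.exp (x / 2) ^ 2 = Real.exp x := by
    rw [← Real.exp_nat_mul]; ring_nf
  have off_diag_ratio : Real.exp (Z / 2) ^ 2 * Real.exp (phi (-Z) / 2) ^ 2 = Real.exp (Z / 2) ^ 2 + 1 := by
    rw [exp_half_sq, exp_half_sq, exp_phi, mul_add, mul_one, ← Real.exp_add, add_neg_cancel,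
      Real.exp_zero]
  simp only [edgeX, diagExp, Rturn, Lturn, mul_fin_two, neg_div, Real.exp_neg, neg_neg,
    EmbeddingLike.apply_eq_iff_eq, vecCons_inj, and_true]
  refine ⟨⟨?_, ?_⟩, ?_, ?_⟩ <;> field_simp
  · ring
  · linear_combination -off_diag_ratio
  · linear_combination -off_diag_ratio
  · ring

theorem flip_identity_RL (B D Z : ℝ) :
    edgeX D * Rturn * edgeX Z * Lturn * edgeX B
      = edgeX (D - phi (-Z)) * Lturn * edgeX (-Z) * Rturn * edgeX (B - phi (-Z)) := by
  calc edgeX D * Rturn * edgeX Z * Lturn * edgeX B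
      = edgeX D * (Rturn * edgeX Z * Lturn) * edgeX B := by simp only [Matrix.mul_assoc]
    _ = edgeX D * (diagExp (phi (-Z)) * (Lturn * edgeX (-Z) * Rturn) * diagExp (-phi (-Z)))
          * edgeX B := by rw [Rturn_mul_edgeX_mul_Lturn]
    _ = _ := by
      rw [edgeX_sub_eq_mul_diagExp D, edgeX_sub_eq_diagExp_mul B]
      simp only [Matrix.mul_assoc]
end

section
/- Let n ≥ 2, let a_1, …, a_n be real numbers, and let M = X_{a_n} T_{n-1} X_{a_{n-1}} ⋯ T_1 X_{a_1}, where each T_i ∈ {R, L}, and suppose there is an index j such that T_1 = ⋯ = T_{j} = L and T_{j+1} = ⋯ = T_{n-1} = R (i.e., reading from right to left, all left turns precede all right turns). Then the (1,2) entry of M equals -exp((a_1 + a_2 + ⋯ + a_n)/2). -/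
open Matrix

/-- `word a T k` is the path matrix `X_{a_{k+1}} T_k X_{a_k} ⋯ T_1 X_{a_1}`,
i.e. the word with `k+1` edge matrices and `k` turn matrices. -/
noncomputable def word (a : ℕ → ℝ) (T : ℕ → Matrix (Fin 2) (Fin 2) ℝ) : ℕ → Matrix (Fin 2) (Fin 2) ℝ
  | 0 => edgeX (a 1)
  | k + 1 => edgeX (a (k + 2)) * T (k + 1) * word a T k

lemma entL01 (Y : ℝ) (M : Matrix (Fin 2) (Fin 2) ℝ) :
    (edgeX Y * Lturn * M) 0 1 = Real.exp (Y/2) * (M 0 1 + M 1 1) := by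
  simp [edgeX, Lturn, Matrix.mul_apply, Fin.sum_univ_two]; ring

lemma entL10 (Y : ℝ) (M : Matrix (Fin 2) (Fin 2) ℝ) :
    (edgeX Y * Lturn * M) 1 0 = Real.exp (-(Y/2)) * M 1 0 := by
  simp [edgeX, Lturn, Matrix.mul_apply, Fin.sum_univ_two, neg_div]

lemma entL11 (Y : ℝ) (M : Matrix (Fin 2) (Fin 2) ℝ) :
    (edgeX Y * Lturn * M) 1 1 = Real.exp (-(Y/2)) * M 1 1 := by
  simp [edgeX, Lturn, Matrix.mul_apply, Fin.sum_univ_two, neg_div]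

lemma entR01 (Y : ℝ) (M : Matrix (Fin 2) (Fin 2) ℝ) :
    (edgeX Y * Rturn * M) 0 1 = Real.exp (Y/2) * M 0 1 := by
  simp [edgeX, Rturn, Matrix.mul_apply, Fin.sum_univ_two]

lemma entR11 (Y : ℝ) (M : Matrix (Fin 2) (Fin 2) ℝ) :
    (edgeX Y * Rturn * M) 1 1 = Real.exp (-(Y/2)) * (M 0 1 + M 1 1) := by
  simp [edgeX, Rturn, Matrix.mul_apply, Fin.sum_univ_two, neg_div]; ring

lemma key (a : ℕ → ℝ) (T : ℕ → Matrix (Fin 2) (Fin 2) ℝ) (n j : ℕ)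
    (hT : ∀ i : ℕ, 1 ≤ i → i ≤ n - 1 →
      (i ≤ j → T i = Lturn) ∧ (j < i → T i = Rturn)) :
    ∀ k, k ≤ n - 1 →
      (word a T k) 0 1 = -Real.exp ((∑ i ∈ Finset.Icc 1 (k+1), a i) / 2) ∧
      (word a T k) 1 1 ≤ 0 ∧
      (k ≤ j → (word a T k) 1 0 = Real.exp (-((∑ i ∈ Finset.Icc 1 (k+1), a i) / 2)) ∧
               (word a T k) 1 1 = 0) := by
  intro k
  induction k with
  | zero =>
      intro _
      simp [word, edgeX, Finset.Icc_self, neg_div]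
  | succ k ih =>
      intro hk
      have hk' : k ≤ n - 1 := by omega
      obtain ⟨h01, h11, hL⟩ := ih hk'
      have hsum : (∑ i ∈ Finset.Icc 1 (k+2), a i)
          = (∑ i ∈ Finset.Icc 1 (k+1), a i) + a (k+2) := by
        have := Finset.sum_Icc_succ_top (a := 1) (b := k+1) (by omega) a
        simpa using this
      have hTk := hT (k+1) (by omega) (by omega)
      have hword : word a T (k+1) = edgeX (a (k+2)) * T (k+1) * word a T k := rfl
      set E := Real.exp ((∑ i ∈ Finset.Icc 1 (k+1), a i) / 2) with hE
      have hexp : Real.exp ((∑ i ∈ Finset.Icc 1 (k+2), a i) / 2)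
          = Real.exp (a (k+2) / 2) * E := by
        rw [hsum, hE, ← Real.exp_add]; ring_nf
      have hexp' : Real.exp (-((∑ i ∈ Finset.Icc 1 (k+2), a i) / 2))
          = Real.exp (-(a (k+2) / 2)) * Real.exp (-((∑ i ∈ Finset.Icc 1 (k+1), a i) / 2)) := by
        rw [hsum, ← Real.exp_add]; ring_nf
      by_cases hcase : k + 1 ≤ j
      · -- L step
        have hTL := hTk.1 hcase
        obtain ⟨h10, h11z⟩ := hL (by omega)
        refine ⟨?_, ?_, fun _ => ⟨?_, ?_⟩⟩
        · rw [hword, hTL, entL01, h01, h11z, hexp]; ring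
        · rw [hword, hTL, entL11, h11z]; simp
        · rw [hword, hTL, entL10, h10, hexp']
        · rw [hword, hTL, entL11, h11z]; simp
      · -- R step
        have hTR := hTk.2 (by omega)
        refine ⟨?_, ?_, fun h => absurd h hcase⟩
        · rw [hword, hTR, entR01, h01, hexp]; ring
        · rw [hword, hTR, entR11, h01]
          have : -E + (word a T k) 1 1 ≤ 0 := by
            have := Real.exp_pos ((∑ i ∈ Finset.Icc 1 (k+1), a i) / 2)
            rw [hE]; linarith
          have hp := (Real.exp_pos (-(a (k+2) / 2))).le
          nlinarith

theorem lambda_length_monomial (n : ℕ) (hn : 2 ≤ n) (a : ℕ → ℝ)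
    (T : ℕ → Matrix (Fin 2) (Fin 2) ℝ)
    (hsplit : ∃ j : ℕ, ∀ i : ℕ, 1 ≤ i → i ≤ n - 1 →
      (i ≤ j → T i = Lturn) ∧ (j < i → T i = Rturn)) :
    (word a T (n - 1)) 0 1 = -Real.exp ((∑ i ∈ Finset.Icc 1 n, a i) / 2) := by
  obtain ⟨j, hT⟩ := hsplit
  have h := (key a T n j hT (n-1) le_rfl).1
  have hn1 : n - 1 + 1 = n := by omega
  rwa [hn1] at h
end

section
/- Let n ≥ 2, a_1,…,a_n ∈ ℝ, and M = X_{a_n} T_{n-1} X_{a_{n-1}} ⋯ T_1 X_{a_1} with each T_i ∈ {R, L}. Then M_{11} ≥ 0, M_{12} < 0, M_{21} > 0 and M_{22} ≤ 0. Moreover, each entry of M is, up to sign, a finite sum of exponentials of the form exp((ε_1 a_1 + ⋯ + ε_n a_n)/2) with signs ε_i ∈ {-1,+1} (i.e., a Laurent polynomial in the variables e^{a_i/2} with nonnegative integer coefficients). -/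
open Matrix

/-- `x` is a sum of exponentials `exp((±a 1 ± ⋯ ± a k)/2)`. -/
def ExpRep (k : ℕ) (a : ℕ → ℝ) (x : ℝ) : Prop :=
  ∃ (m : ℕ) (ε : Fin m → ℕ → ℤ),
    (∀ t i, ε t i = 1 ∨ ε t i = -1) ∧
    x = ∑ t : Fin m, Real.exp ((∑ i ∈ Finset.Icc 1 k, (ε t i : ℝ) * a i) / 2)

lemma ExpRep.zero (k : ℕ) (a : ℕ → ℝ) : ExpRep k a 0 :=
  ⟨0, fun _ _ => 1, fun t => t.elim0, by simp⟩

lemma ExpRep.one (a : ℕ → ℝ) : ExpRep 0 a 1 :=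
  ⟨1, fun _ _ => 1, fun _ _ => Or.inl rfl, by simp⟩

lemma ExpRep.add {k : ℕ} {a : ℕ → ℝ} {x y : ℝ} (hx : ExpRep k a x) (hy : ExpRep k a y) :
    ExpRep k a (x + y) := by
  obtain ⟨m1, ε1, h1, e1⟩ := hx
  obtain ⟨m2, ε2, h2, e2⟩ := hy
  refine ⟨m1 + m2, Fin.addCases ε1 ε2, ?_, ?_⟩
  · intro t i
    refine Fin.addCases (fun t => ?_) (fun t => ?_) t
    · simpa using h1 t i
    · simpa using h2 t i
  · rw [e1, e2, Fin.sum_univ_add]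
    simp

lemma ExpRep.scale {k : ℕ} {a : ℕ → ℝ} {x : ℝ} (s : ℤ) (hs : s = 1 ∨ s = -1)
    (hx : ExpRep k a x) : ExpRep (k + 1) a (Real.exp ((s : ℝ) * a (k + 1) / 2) * x) := by
  obtain ⟨m, ε, h, e⟩ := hx
  refine ⟨m, fun t i => if i = k + 1 then s else ε t i, ?_, ?_⟩
  · intro t i
    by_cases hi : i = k + 1 <;> simp [hi, hs, h t i]
  · rw [e, Finset.mul_sum]
    refine Finset.sum_congr rfl fun t _ => ?_
    rw [← Real.exp_add]
    congr 1
    have hsum : ∑ i ∈ Finset.Icc 1 (k+1),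
        (((if i = k + 1 then s else ε t i : ℤ) : ℝ)) * a i
        = (s:ℝ) * a (k+1) + ∑ i ∈ Finset.Icc 1 k, (ε t i : ℝ) * a i := by
      rw [Finset.sum_Icc_succ_top (by omega : 1 ≤ k + 1), if_pos rfl, add_comm]
      congr 1
      refine Finset.sum_congr rfl fun i hi => ?_
      have hne : i ≠ k + 1 := by have := (Finset.mem_Icc.mp hi).2; omega
      simp [hne]
    rw [hsum]
    ring

lemma XR_mul (Y : ℝ) (M : Matrix (Fin 2) (Fin 2) ℝ) :
    edgeX Y * Rturn * M =
      !![Real.exp (Y/2) * M 0 0, Real.exp (Y/2) * M 0 1;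
         Real.exp (-Y/2) * (M 0 0 + M 1 0), Real.exp (-Y/2) * (M 0 1 + M 1 1)] := by
  ext i j
  fin_cases i <;> fin_cases j <;>
    simp [edgeX, Rturn, Matrix.mul_apply, Fin.sum_univ_two] <;> ring

lemma XL_mul (Y : ℝ) (M : Matrix (Fin 2) (Fin 2) ℝ) :
    edgeX Y * Lturn * M =
      !![Real.exp (Y/2) * (M 0 0 + M 1 0), Real.exp (Y/2) * (M 0 1 + M 1 1);
         Real.exp (-Y/2) * M 1 0, Real.exp (-Y/2) * M 1 1] := by
  ext i j
  fin_cases i <;> fin_cases j <;>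
    simp [edgeX, Lturn, Matrix.mul_apply, Fin.sum_univ_two] <;> ring

def Good (a : ℕ → ℝ) (T : ℕ → Matrix (Fin 2) (Fin 2) ℝ) (k : ℕ) : Prop :=
  0 ≤ (word a T k) 0 0 ∧ (word a T k) 0 1 < 0 ∧
  0 < (word a T k) 1 0 ∧ (word a T k) 1 1 ≤ 0 ∧
  ExpRep (k + 1) a ((word a T k) 0 0) ∧ ExpRep (k + 1) a (-(word a T k) 0 1) ∧
  ExpRep (k + 1) a ((word a T k) 1 0) ∧ ExpRep (k + 1) a (-(word a T k) 1 1)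

lemma good_zero (a : ℕ → ℝ) (T : ℕ → Matrix (Fin 2) (Fin 2) ℝ) : Good a T 0 := by
  have e00 : (word a T 0) 0 0 = 0 := by simp [word, edgeX]
  have e01 : (word a T 0) 0 1 = -Real.exp (a 1 / 2) := by simp [word, edgeX]
  have e10 : (word a T 0) 1 0 = Real.exp (-(a 1) / 2) := by simp [word, edgeX]
  have e11 : (word a T 0) 1 1 = 0 := by simp [word, edgeX]
  have h1 : ExpRep 1 a (Real.exp (((1:ℤ):ℝ) * a (0 + 1) / 2) * 1) :=
    ExpRep.scale 1 (Or.inl rfl) (ExpRep.one a)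
  have h2 : ExpRep 1 a (Real.exp (((-1:ℤ):ℝ) * a (0 + 1) / 2) * 1) :=
    ExpRep.scale (-1) (Or.inr rfl) (ExpRep.one a)
  unfold Good
  rw [e00, e01, e10, e11]
  refine ⟨le_refl 0, by simpa using Real.exp_pos _, Real.exp_pos _, le_refl 0,
    ExpRep.zero 1 a, ?_, ?_, by simpa using ExpRep.zero 1 a⟩
  · have h : Real.exp (((1:ℤ):ℝ) * a (0 + 1) / 2) * 1 = Real.exp (a 1 / 2) := by
      norm_num
    rw [h] at h1
    simpa using h1
  · have h : Real.exp (((-1:ℤ):ℝ) * a (0 + 1) / 2) * 1 = Real.exp (-(a 1) / 2) := by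
      push_cast
      ring_nf
    rw [h] at h2
    exact h2

lemma good_succ (a : ℕ → ℝ) (T : ℕ → Matrix (Fin 2) (Fin 2) ℝ) (k : ℕ)
    (hT : T (k + 1) = Rturn ∨ T (k + 1) = Lturn) (h : Good a T k) : Good a T (k + 1) := by
  obtain ⟨h00, h01, h10, h11, r00, r01, r10, r11⟩ := h
  set M := word a T k with hM
  have hw : word a T (k + 1) = edgeX (a (k + 2)) * T (k + 1) * M := rfl
  have e1 : Real.exp (a (k + 2) / 2) = Real.exp (((1:ℤ):ℝ) * a (k + 1 + 1) / 2) := by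
    norm_num
  have e2 : Real.exp (-a (k + 2) / 2) = Real.exp (((-1:ℤ):ℝ) * a (k + 1 + 1) / 2) := by
    push_cast; ring_nf
  have ep := Real.exp_pos (a (k + 2) / 2)
  have en := Real.exp_pos (-a (k + 2) / 2)
  rcases hT with hR | hL
  · unfold Good
    rw [hw, hR, XR_mul]
    simp only [Matrix.of_apply, Fin.isValue, Matrix.cons_val', Matrix.cons_val_zero, Matrix.cons_val_fin_one,
      Matrix.cons_val_one, Matrix.head_cons, Matrix.head_fin_const, Matrix.empty_val']
    refine ⟨by positivity, mul_neg_of_pos_of_neg ep h01,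
      by positivity, mul_nonpos_of_nonneg_of_nonpos en.le (by linarith),
      ?_, ?_, ?_, ?_⟩
    · rw [e1]; exact ExpRep.scale 1 (Or.inl rfl) r00
    · rw [show -(Real.exp (a (k+2)/2) * M 0 1) = Real.exp (a (k+2)/2) * (-(M 0 1)) by ring,
        e1]
      exact ExpRep.scale 1 (Or.inl rfl) r01
    · rw [e2]; exact ExpRep.scale (-1) (Or.inr rfl) (r00.add r10)
    · rw [show -(Real.exp (-a (k+2)/2) * (M 0 1 + M 1 1))
          = Real.exp (-a (k+2)/2) * ((-(M 0 1)) + (-(M 1 1))) by ring, e2]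
      exact ExpRep.scale (-1) (Or.inr rfl) (r01.add r11)
  · unfold Good
    rw [hw, hL, XL_mul]
    simp only [Matrix.of_apply, Fin.isValue, Matrix.cons_val', Matrix.cons_val_zero, Matrix.cons_val_fin_one,
      Matrix.cons_val_one, Matrix.head_cons, Matrix.head_fin_const, Matrix.empty_val']
    refine ⟨by positivity, mul_neg_of_pos_of_neg ep (by linarith),
      by positivity, mul_nonpos_of_nonneg_of_nonpos en.le h11, ?_, ?_, ?_, ?_⟩
    · rw [e1]; exact ExpRep.scale 1 (Or.inl rfl) (r00.add r10)
    · rw [show -(Real.exp (a (k+2)/2) * (M 0 1 + M 1 1))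
          = Real.exp (a (k+2)/2) * ((-(M 0 1)) + (-(M 1 1))) by ring, e1]
      exact ExpRep.scale 1 (Or.inl rfl) (r01.add r11)
    · rw [e2]; exact ExpRep.scale (-1) (Or.inr rfl) r10
    · rw [show -(Real.exp (-a (k+2)/2) * M 1 1) = Real.exp (-a (k+2)/2) * (-(M 1 1)) by ring,
        e2]
      exact ExpRep.scale (-1) (Or.inr rfl) r11

theorem path_matrix_positivity (n : ℕ) (hn : 2 ≤ n) (a : ℕ → ℝ)
    (T : ℕ → Matrix (Fin 2) (Fin 2) ℝ)
    (hT : ∀ i : ℕ, 1 ≤ i → i ≤ n - 1 → T i = Rturn ∨ T i = Lturn) :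
    (0 ≤ (word a T (n - 1)) 0 0 ∧ (word a T (n - 1)) 0 1 < 0 ∧
     0 < (word a T (n - 1)) 1 0 ∧ (word a T (n - 1)) 1 1 ≤ 0) ∧
    (∀ k l : Fin 2, ∃ (m : ℕ) (ε : Fin m → ℕ → ℤ),
      (∀ t i, ε t i = 1 ∨ ε t i = -1) ∧
      |(word a T (n - 1)) k l|
        = ∑ t : Fin m, Real.exp ((∑ i ∈ Finset.Icc 1 n, (ε t i : ℝ) * a i) / 2)) := by
  have key : ∀ j : ℕ, j ≤ n - 1 → Good a T j := by
    intro j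
    induction j with
    | zero => intro _; exact good_zero a T
    | succ k ih =>
      intro hj
      exact good_succ a T k (hT (k + 1) (by omega) hj) (ih (by omega))
  obtain ⟨h00, h01, h10, h11, r00, r01, r10, r11⟩ := key (n - 1) le_rfl
  have hn1 : n - 1 + 1 = n := by omega
  rw [hn1] at r00 r01 r10 r11
  refine ⟨⟨h00, h01, h10, h11⟩, ?_⟩
  intro k l
  fin_cases k <;> fin_cases l <;>
    simp only [Fin.zero_eta, Fin.mk_one, Fin.isValue]
  · obtain ⟨m, ε, hε, he⟩ := r00
    exact ⟨m, ε, hε, by rw [abs_of_nonneg h00]; exact he⟩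
  · obtain ⟨m, ε, hε, he⟩ := r01
    exact ⟨m, ε, hε, by rw [abs_of_neg h01]; exact he⟩
  · obtain ⟨m, ε, hε, he⟩ := r10
    exact ⟨m, ε, hε, by rw [abs_of_pos h10]; exact he⟩
  · obtain ⟨m, ε, hε, he⟩ := r11
    exact ⟨m, ε, hε, by rw [abs_of_nonpos h11]; exact he⟩
end

section
/- On the manifold ℝ_{>0}^5 with coordinates (a,b,c,d,e), define e' = (ac+bd)/e, and write dℓx for dlog x = dx/x. Then the following identity of differential 2-forms holds: dℓa∧dℓb + dℓb∧dℓe + dℓe∧dℓa + dℓc∧dℓd + dℓd∧dℓe + dℓe∧dℓc = dℓa∧dℓe' + dℓe'∧dℓd + dℓd∧dℓa + dℓe'∧dℓb + dℓb∧dℓc + dℓc∧dℓe'. -/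
/-- The value of the 1-form `d log f` at the point `p`, evaluated on the tangent vector `u`. -/
noncomputable def dlog (f : (Fin 5 → ℝ) → ℝ) (p u : Fin 5 → ℝ) : ℝ :=
  fderiv ℝ (fun q => Real.log (f q)) p u

/-- The wedge `d log f ∧ d log g` at the point `p`, evaluated on the pair `(u, v)`. -/
noncomputable def wdg (f g : (Fin 5 → ℝ) → ℝ) (p u v : Fin 5 → ℝ) : ℝ :=
  dlog f p u * dlog g p v - dlog f p v * dlog g p u

/-!
Write `A, …, E` for `dℓa, …, dℓe`, `x = ac`, `y = bd`, `P = A + C`, `Q = B + D`.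
Since `dℓ` turns products into sums and quotients into differences, and a sum into the
weighted mean of the summands' `dℓ`, we get `dℓe' = N - E` with `N = (x P + y Q) / (x + y)`.
Collecting terms, both sides contain `-(P - Q) ∧ E`, and what is left to check is
`A ∧ B + C ∧ D = D ∧ A + B ∧ C + (P - Q) ∧ N`, i.e. `(P - Q) ∧ N = P ∧ Q`,
which holds because `(P - Q) ∧ (x P + y Q) = (x + y) P ∧ Q`.
-/

section LogDerivative

open Filter Topology

variable {f g : (Fin 5 → ℝ) → ℝ} {p : Fin 5 → ℝ}
  (hf : DifferentiableAt ℝ f p) (hg : DifferentiableAt ℝ g p) (hfp : f p ≠ 0) (hgp : g p ≠ 0)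
include hf hfp

theorem dlog_eq_fderiv_div (u : Fin 5 → ℝ) : dlog f p u = fderiv ℝ f p u / f p := by
  rw [dlog, (hf.hasFDerivAt.log hfp).fderiv]
  simp [div_eq_inv_mul]

include hg hgp

theorem dlog_mul (u : Fin 5 → ℝ) :
    dlog (fun q => f q * g q) p u = dlog f p u + dlog g p u := by
  have hlog : (fun q => Real.log (f q * g q)) =ᶠ[𝓝 p]
      fun q => Real.log (f q) + Real.log (g q) := by
    filter_upwards [hf.continuousAt.eventually_ne hfp, hg.continuousAt.eventually_ne hgp]
      with q hfq hgq
    exact Real.log_mul hfq hgq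
  rw [dlog, hlog.fderiv_eq, fderiv_fun_add (hf.log hfp) (hg.log hgp)]
  rfl

theorem dlog_div (u : Fin 5 → ℝ) :
    dlog (fun q => f q / g q) p u = dlog f p u - dlog g p u := by
  have hlog : (fun q => Real.log (f q / g q)) =ᶠ[𝓝 p]
      fun q => Real.log (f q) - Real.log (g q) := by
    filter_upwards [hf.continuousAt.eventually_ne hfp, hg.continuousAt.eventually_ne hgp]
      with q hfq hgq
    exact Real.log_div hfq hgq
  rw [dlog, hlog.fderiv_eq, fderiv_fun_sub (hf.log hfp) (hg.log hgp)]
  rfl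

theorem dlog_add (hfgp : f p + g p ≠ 0) (u : Fin 5 → ℝ) :
    dlog (fun q => f q + g q) p u = (f p * dlog f p u + g p * dlog g p u) / (f p + g p) := by
  rw [dlog_eq_fderiv_div (hf.fun_add hg) hfgp, fderiv_fun_add hf hg,
    dlog_eq_fderiv_div hf hfp, dlog_eq_fderiv_div hg hgp]
  simp only [add_apply]
  field_simp

end LogDerivative

theorem wdg_flip_of_dlog_eq {a b c d e e' : (Fin 5 → ℝ) → ℝ} {p : Fin 5 → ℝ} {x y : ℝ}
    (hxy : x + y ≠ 0)
    (he' : ∀ w, dlog e' p w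
      = (x * (dlog a p w + dlog c p w) + y * (dlog b p w + dlog d p w)) / (x + y) - dlog e p w)
    (u v : Fin 5 → ℝ) :
    wdg a b p u v + wdg b e p u v + wdg e a p u v
      + wdg c d p u v + wdg d e p u v + wdg e c p u v
    = wdg a e' p u v + wdg e' d p u v + wdg d a p u v
      + wdg e' b p u v + wdg b c p u v + wdg c e' p u v := by
  simp only [wdg, he']
  field_simp
  ring

theorem penner_form_flip_invariance (p : Fin 5 → ℝ) (hp : ∀ i, 0 < p i)
    (u v : Fin 5 → ℝ) :
    let a : (Fin 5 → ℝ) → ℝ := fun q => q 0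
    let b : (Fin 5 → ℝ) → ℝ := fun q => q 1
    let c : (Fin 5 → ℝ) → ℝ := fun q => q 2
    let d : (Fin 5 → ℝ) → ℝ := fun q => q 3
    let e : (Fin 5 → ℝ) → ℝ := fun q => q 4
    let e' : (Fin 5 → ℝ) → ℝ := fun q => (q 0 * q 2 + q 1 * q 3) / q 4
    wdg a b p u v + wdg b e p u v + wdg e a p u v
      + wdg c d p u v + wdg d e p u v + wdg e c p u v
    = wdg a e' p u v + wdg e' d p u v + wdg d a p u v
      + wdg e' b p u v + wdg b c p u v + wdg c e' p u v := by
  intro a b c d e e'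
  have hx : 0 < p 0 * p 2 := mul_pos (hp 0) (hp 2)
  have hy : 0 < p 1 * p 3 := mul_pos (hp 1) (hp 3)
  have hxy : p 0 * p 2 + p 1 * p 3 ≠ 0 := (add_pos hx hy).ne'
  have hpi (i : Fin 5) : p i ≠ 0 := (hp i).ne'
  have hdiff (i : Fin 5) := differentiableAt_apply (𝕜 := ℝ) i p
  refine wdg_flip_of_dlog_eq hxy (fun w => ?_) u v
  rw [dlog_div (by fun_prop) (hdiff 4) hxy (hpi 4),
    dlog_add (by fun_prop) (by fun_prop) hx.ne' hy.ne' hxy,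
    dlog_mul (hdiff 0) (hdiff 2) (hpi 0) (hpi 2), dlog_mul (hdiff 1) (hdiff 3) (hpi 1) (hpi 3)]
end

section
/- Let φ(x) = log(1+e^x) and σ(x) = φ'(x) = e^x/(1+e^x). Define F: ℝ^5 → ℝ^5 by F(A,B,C,D,Z) = (A+φ(Z), B-φ(-Z), C+φ(Z), D-φ(-Z), -Z). Let P be the 5×5 antisymmetric matrix (with coordinate order A,B,C,D,Z) determined by P_{AB}=1, P_{BZ}=1, P_{ZA}=1, P_{ZC}=1, P_{CD}=1, P_{DZ}=1, and let P' be the antisymmetric matrix determined by P'_{AZ}=1, P'_{ZD}=1, P'_{DA}=1, P'_{ZB}=1, P'_{BC}=1, P'_{CZ}=1. Then the Jacobian matrix J of F satisfies, at every point, J·P·J^T = P'. -/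
open Matrix

/-- The flip map in the extended shear coordinates (A,B,C,D,Z). -/
noncomputable def flipMap (q : Fin 5 → ℝ) : Fin 5 → ℝ :=
  ![q 0 + phi (q 4), q 1 - phi (-q 4), q 2 + phi (q 4), q 3 - phi (-q 4), -q 4]

/-- The Jacobian matrix of `flipMap` at the point `p`. -/
noncomputable def jac (p : Fin 5 → ℝ) : Matrix (Fin 5) (Fin 5) ℝ :=
  fun i j => fderiv ℝ (fun q => flipMap q i) p (Pi.single j 1)

/-- Local Fock Poisson tensor before the flip (coordinate order A,B,C,D,Z). -/
def Pmat : Matrix (Fin 5) (Fin 5) ℝ :=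
  !![0, 1, 0, 0, -1;
     -1, 0, 0, 0, 1;
     0, 0, 0, 1, -1;
     0, 0, -1, 0, 1;
     1, -1, 1, -1, 0]

/-- Local Fock Poisson tensor after the flip. -/
def Pmat' : Matrix (Fin 5) (Fin 5) ℝ :=
  !![0, 0, 0, -1, 1;
     0, 0, 1, 0, -1;
     0, -1, 0, 0, 1;
     1, 0, 0, 0, -1;
     -1, 1, -1, 1, 0]

/-!
Since `phi' = σ` (the logistic sigmoid) and `σ(-Z) = 1 - σ(Z)`, the Jacobian of the flip at any
point is a matrix `J_s` depending only on `s = σ(Z)`. The identity `J_s P J_sᵀ = P'` then holds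
for every real `s`: the terms in `s` cancel entrywise, because `P` vanishes on the pair `(Z, Z)`.
-/

lemma hasDerivAt_phi (x : ℝ) : HasDerivAt phi (Real.sigmoid x) x := by
  have h : HasDerivAt phi (Real.exp x / (1 + Real.exp x)) x :=
    ((Real.hasDerivAt_exp x).const_add 1).log (by positivity)
  convert h using 1
  rw [Real.sigmoid_def, Real.exp_neg]
  field_simp
  ring

lemma hasFDerivAt_phi_comp {E : Type*} [NormedAddCommGroup E] [NormedSpace ℝ E]
    (ℓ : E →L[ℝ] ℝ) (p : E) :
    HasFDerivAt (fun q => phi (ℓ q)) (Real.sigmoid (ℓ p) • ℓ) p :=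
  (hasDerivAt_phi (ℓ p)).comp_hasFDerivAt p ℓ.hasFDerivAt

def flipJacobian (s : ℝ) : Matrix (Fin 5) (Fin 5) ℝ :=
  !![1, 0, 0, 0, s;
     0, 1, 0, 0, 1 - s;
     0, 0, 1, 0, s;
     0, 0, 0, 1, 1 - s;
     0, 0, 0, 0, -1]

theorem flipJacobian_mul_Pmat_mul_transpose (s : ℝ) :
    flipJacobian s * Pmat * (flipJacobian s)ᵀ = Pmat' := by
  ext i j
  fin_cases i <;> fin_cases j <;>
    simp [flipJacobian, Pmat, Pmat', Matrix.mul_apply, Fin.sum_univ_five] <;> ring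

theorem jac_eq_flipJacobian (p : Fin 5 → ℝ) : jac p = flipJacobian (Real.sigmoid (p 4)) := by
  let π (k : Fin 5) : (Fin 5 → ℝ) →L[ℝ] ℝ := ContinuousLinearMap.proj k
  have hplus (k : Fin 5) := ((π k).hasFDerivAt (x := p)).add (hasFDerivAt_phi_comp (π 4) p)
  have hminus (k : Fin 5) := ((π k).hasFDerivAt (x := p)).sub (hasFDerivAt_phi_comp (-π 4) p)
  have hrow : ∀ i, fderiv ℝ (fun q => flipMap q i) p = ![π 0 + Real.sigmoid (p 4) • π 4,
      π 1 - Real.sigmoid (-p 4) • (-π 4), π 2 + Real.sigmoid (p 4) • π 4,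
      π 3 - Real.sigmoid (-p 4) • (-π 4), -π 4] i := by
    intro i
    fin_cases i
    · exact (hplus 0).fderiv
    · exact (hminus 1).fderiv
    · exact (hplus 2).fderiv
    · exact (hminus 3).fderiv
    · exact (π 4).hasFDerivAt.neg.fderiv
  ext i j
  rw [jac, hrow]
  fin_cases i <;> fin_cases j <;> simp [π, flipJacobian, Real.sigmoid_neg]

theorem flip_preserves_poisson (p : Fin 5 → ℝ) :
    jac p * Pmat * (jac p)ᵀ = Pmat' := by
  rw [jac_eq_flipJacobian, flipJacobian_mul_Pmat_mul_transpose]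
end
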